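/- Let N ≥ 3, let α > -2 and p > 1, and let u be a positive classical solution of the Hénon equation -Δu = |x|^α u^p in ℝ^N. Then the radial derivative term vanishes at the origin in the sense that lim_{x → 0} ∇u(x)·x = 0. -/

import Mathlib

open MeasureTheory Filter Metric

/-- The Laplacian of `u : ℝ^N → ℝ` at `x`, as the sum of the second derivatives
in the coordinate directions. -/
noncomputable def laplacian {N : ℕ} (u : EuclideanSpace ℝ (Fin N) → ℝ)
    (x : EuclideanSpace ℝ (Fin N)) : ℝ :=
  ∑ i, iteratedFDeriv ℝ 2 u x ![EuclideanSpace.single i 1, EuclideanSpace.single i 1]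

/-- A positive classical solution of the Hénon equation `-Δu = |x|^α u^p` in `ℝ^N`:
`u` is continuous on `ℝ^N`, strictly positive, `C²` on `ℝ^N \ {0}`, and satisfies
the equation at every `x ≠ 0`. -/
def IsHenonSolution (N : ℕ) (α p : ℝ) (u : EuclideanSpace ℝ (Fin N) → ℝ) : Prop :=
  Continuous u ∧ (∀ x, 0 < u x) ∧
    ContDiffOn ℝ 2 u {(0 : EuclideanSpace ℝ (Fin N))}ᶜ ∧
    ∀ x : EuclideanSpace ℝ (Fin N), x ≠ 0 → -laplacian u x = ‖x‖ ^ α * u x ^ p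

/-!
Fix `x ≠ 0`, let `e = x / ‖x‖` and work in the ball of radius `r = ‖x‖ / 2` around `x`, where
`|Δu| ≤ M ≲ ‖x‖ ^ α` and `u` stays within `ε` of `u 0`, with `ε → 0` as `x → 0`. The odd part
`w = (u - u ∘ R) / 2` of `u` with respect to the reflection `R` in the hyperplane through `x`
orthogonal to `e` vanishes on that hyperplane, satisfies `|w| ≤ ε` and `|Δw| ≤ M`, and has
`∂ₑw(x) = ∂ₑu(x)`. Comparing `±w` with a quadratic barrier on a half ball by the maximum principle
gives `|∂ₑu(x)| ≤ r M / 2 + 2 (N + 1) ε / r`, hence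
`|∇u(x) · x| ≤ ‖x‖² M / 4 + 4 (N + 1) ε ≲ ‖x‖ ^ (2 + α) + ε`, which tends to `0` as `α > -2`.
-/

open scoped Laplacian RealInnerProductSpace
open InnerProductSpace Module Topology Set

theorem IsLocalMax.deriv_deriv_nonpos {f : ℝ → ℝ} {a : ℝ} (h : IsLocalMax f a)
    (hf : ContinuousAt f a) : deriv (deriv f) a ≤ 0 := by
  -- if `f'' a > 0`, the second derivative test makes `a` a local minimum as well, so `f` is
  -- locally constant and `f'' a = 0`
  by_contra! hpos
  have hmin : IsLocalMin f a := isLocalMin_of_deriv_deriv_pos hpos h.deriv_eq_zero hf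
  have hconst : ∀ᶠ x in 𝓝 a, f x = f a := by
    filter_upwards [h, hmin] with x hmax hmin using le_antisymm hmax hmin
  have hderiv : deriv f =ᶠ[𝓝 a] fun _ => 0 := by
    filter_upwards [hconst.eventually_nhds] with x hx
    rw [EventuallyEq.deriv_eq (f := fun _ => f a) hx, deriv_const]
  simp [hderiv.deriv_eq] at hpos

theorem deriv_deriv_quadratic (a b c : ℝ) :
    deriv (deriv fun t : ℝ => a + b * t + c * t ^ 2) 0 = 2 * c := by
  have hderiv : deriv (fun t : ℝ => a + b * t + c * t ^ 2) = fun t => b + 2 * c * t := by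
    funext t
    exact ((((hasDerivAt_id t).const_mul b).const_add a).add
      ((hasDerivAt_pow 2 t).const_mul c)).deriv.trans (by norm_num; ring)
  rw [hderiv]
  exact (((hasDerivAt_id (0 : ℝ)).const_mul (2 * c)).const_add b).deriv.trans (by simp)

theorem abs_le_of_hasDerivAt_of_abs_le_mul {g : ℝ → ℝ} {D K η : ℝ} (hg : HasDerivAt g D 0)
    (h₀ : g 0 = 0) (hη : 0 < η) (hK : ∀ t ∈ Ioc 0 η, |g t| ≤ K * t) : |D| ≤ K := by
  have hslope : Tendsto (fun t => |slope g 0 t|) (𝓝[>] 0) (𝓝 |D|) :=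
    ((hasDerivAt_iff_tendsto_slope.1 hg).mono_left (nhdsWithin_mono 0 fun t ht => ne_of_gt ht)).abs
  refine le_of_tendsto hslope ?_
  filter_upwards [Ioc_mem_nhdsGT hη] with t ht
  rw [slope_def_field, h₀, sub_zero, sub_zero, abs_div, abs_of_pos ht.1, div_le_iff₀ ht.1]
  exact hK t ht

theorem Real.rpow_le_two_rpow_abs_mul_rpow {s t : ℝ} (α : ℝ) (hs : 0 < s) (h₁ : s / 2 ≤ t)
    (h₂ : t ≤ 2 * s) : t ^ α ≤ 2 ^ |α| * s ^ α := by
  have ht : 0 < t := by linarith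
  rw [show t = t / s * s by field_simp, Real.mul_rpow (by positivity) hs.le]
  gcongr
  rcases le_total 0 α with hα | hα
  · rw [abs_of_nonneg hα]
    exact Real.rpow_le_rpow (by positivity) ((div_le_iff₀ hs).2 (by linarith)) hα
  · rw [abs_of_nonpos hα, Real.rpow_neg zero_le_two, ← Real.inv_rpow zero_le_two]
    exact Real.rpow_le_rpow_of_nonpos (by norm_num) ((le_div_iff₀ hs).2 (by linarith)) hα

section SecondDerivatives

variable {E F : Type*} [NormedAddCommGroup E] [NormedAddCommGroup F] [NormedSpace ℝ F]

theorem hasDerivAt_add_smul [NormedSpace ℝ E] (y v : E) (t : ℝ) :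
    HasDerivAt (fun s : ℝ => y + s • v) v t := by
  simpa using ((hasDerivAt_id t).smul_const v).const_add y

theorem ContDiffAt.deriv_deriv_comp_add_smul [NormedSpace ℝ E] {g : E → F} {y : E}
    (hg : ContDiffAt ℝ 2 g y) (v : E) :
    deriv (deriv fun t : ℝ => g (y + t • v)) 0 = fderiv ℝ (fderiv ℝ g) y v v := by
  have hline : Tendsto (fun t : ℝ => y + t • v) (𝓝 0) (𝓝 y) := by
    simpa using (hasDerivAt_add_smul y v 0).continuousAt.tendsto
  have hderiv : deriv (fun t : ℝ => g (y + t • v)) =ᶠ[𝓝 0] fun t => fderiv ℝ g (y + t • v) v := by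
    filter_upwards [hline.eventually (hg.eventually (by simp))] with t ht
    exact ((ht.differentiableAt (by simp)).hasFDerivAt.comp_hasDerivAt t
      (hasDerivAt_add_smul y v t)).deriv
  have hg' : DifferentiableAt ℝ (fderiv ℝ g) y :=
    (hg.fderiv_right (m := 1) le_rfl).differentiableAt one_ne_zero
  rw [hderiv.deriv_eq]
  exact ((hg'.hasFDerivAt.comp_hasDerivAt_of_eq 0 (hasDerivAt_add_smul y v 0) (by simp)).clm_apply
    (hasDerivAt_const 0 v)).deriv.trans (by simp)

variable [InnerProductSpace ℝ E] [FiniteDimensional ℝ E]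

theorem ContDiffAt.laplacian_eq_sum_deriv_deriv {g : E → F} {y : E} (hg : ContDiffAt ℝ 2 g y)
    {ι : Type*} [Fintype ι] (v : OrthonormalBasis ι ℝ E) :
    Δ g y = ∑ i, deriv (deriv fun t : ℝ => g (y + t • v i)) 0 := by
  simp [laplacian_eq_iteratedFDeriv_orthonormalBasis g v, iteratedFDeriv_two_apply,
    hg.deriv_deriv_comp_add_smul]

theorem IsLocalMax.laplacian_nonpos {g : E → ℝ} {y : E} (h : IsLocalMax g y)
    (hg : ContDiffAt ℝ 2 g y) : Δ g y ≤ 0 := by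
  rw [hg.laplacian_eq_sum_deriv_deriv (stdOrthonormalBasis ℝ E)]
  refine Finset.sum_nonpos fun i _ => ?_
  have hline : ContinuousAt (fun t : ℝ => y + t • stdOrthonormalBasis ℝ E i) 0 :=
    (hasDerivAt_add_smul y _ 0).continuousAt
  exact IsLocalMax.deriv_deriv_nonpos (IsLocalMax.comp_continuous (by simpa using h) hline)
    (hg.continuousAt.comp_of_eq hline (by simp))

theorem IsCompact.le_of_laplacian_pos {g : E → ℝ} {S U : Set E} {C : ℝ} (hS : IsCompact S)
    (hU : IsOpen U) (hUS : U ⊆ S) (hgc : ContinuousOn g S) (hg : ∀ y ∈ U, ContDiffAt ℝ 2 g y)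
    (hΔ : ∀ y ∈ U, 0 < Δ g y) (hbd : ∀ y ∈ S \ U, g y ≤ C) {y : E} (hy : y ∈ S) : g y ≤ C := by
  obtain ⟨m, hmS, hmax⟩ := hS.exists_isMaxOn ⟨y, hy⟩ hgc
  have hmU : m ∉ U := fun hmU =>
    ((hmax.on_subset hUS).isLocalMax (hU.mem_nhds hmU)).laplacian_nonpos (hg m hmU) |>.not_gt
      (hΔ m hmU)
  exact (hmax hy).trans (hbd m ⟨hmS, hmU⟩)

theorem laplacian_comp_linearIsometryEquiv (f : E → F) (A : E ≃ₗᵢ[ℝ] E) (x : E) :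
    Δ (f ∘ A) x = Δ f (A x) := by
  have hA : iteratedFDeriv ℝ 2 (f ∘ A) x =
      (iteratedFDeriv ℝ 2 f (A x)).compContinuousLinearMap fun _ => (A : E →L[ℝ] E) := by
    simpa [iteratedFDerivWithin_univ] using
      A.toContinuousLinearEquiv.iteratedFDerivWithin_comp_right f uniqueDiffOn_univ
        (mem_univ (A x)) 2
  rw [laplacian_eq_iteratedFDeriv_orthonormalBasis _ (stdOrthonormalBasis ℝ E),
    laplacian_eq_iteratedFDeriv_orthonormalBasis f ((stdOrthonormalBasis ℝ E).map A)]
  simp [hA, iteratedFDeriv_two_apply]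

theorem laplacian_comp_add_right (f : E → F) (a x : E) :
    Δ (fun z => f (z + a)) x = Δ f (x + a) := by
  simp [laplacian_eq_iteratedFDeriv_orthonormalBasis _ (stdOrthonormalBasis ℝ E),
    iteratedFDeriv_comp_add_right]

theorem laplacian_comp_affineIsometryEquiv (f : E → F) (A : E ≃ᵃⁱ[ℝ] E) (x : E) :
    Δ (f ∘ A) x = Δ f (A x) := by
  have hA : f ∘ A = (fun z => f (z + A 0)) ∘ A.linearIsometryEquiv := by
    funext z
    simpa using congrArg f (A.map_vadd 0 z)
  rw [hA, laplacian_comp_linearIsometryEquiv, laplacian_comp_add_right]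
  simpa using congrArg (Δ f) (A.map_vadd 0 x).symm

end SecondDerivatives

section Barrier

variable {E : Type*} [NormedAddCommGroup E] [InnerProductSpace ℝ E] {x₀ e : E} {r c K : ℝ}

/-- Barrier for the half ball `{0 ≤ ⟪e, y - x₀⟫ ≤ r / 2} ∩ closedBall x₀ r`: the first term
controls the curved part of its boundary, the second the face `⟪e, y - x₀⟫ = r / 2` and the slope
at `x₀`. -/
noncomputable def halfBallBarrier (x₀ e : E) (r c K : ℝ) (y : E) : ℝ :=
  c * (‖y - x₀‖ ^ 2 - ⟪e, y - x₀⟫ ^ 2) + K * (⟪e, y - x₀⟫ - ⟪e, y - x₀⟫ ^ 2 / r)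

theorem contDiff_halfBallBarrier : ContDiff ℝ 2 (halfBallBarrier x₀ e r c K) := by
  have hn : ContDiff ℝ 2 fun y : E => ‖y - x₀‖ ^ 2 := (contDiff_id.sub contDiff_const).norm_sq ℝ
  have hs : ContDiff ℝ 2 fun y : E => ⟪e, y - x₀⟫ :=
    contDiff_const.inner ℝ (contDiff_id.sub contDiff_const)
  unfold halfBallBarrier
  fun_prop

theorem halfBallBarrier_add_smul (y v : E) (t : ℝ) :
    halfBallBarrier x₀ e r c K (y + t • v) = halfBallBarrier x₀ e r c K y +
      (c * (2 * ⟪y - x₀, v⟫ - 2 * ⟪e, y - x₀⟫ * ⟪e, v⟫) +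
        K * (⟪e, v⟫ - 2 * ⟪e, y - x₀⟫ * ⟪e, v⟫ / r)) * t +
      (c * (‖v‖ ^ 2 - ⟪e, v⟫ ^ 2) - K * ⟪e, v⟫ ^ 2 / r) * t ^ 2 := by
  simp only [halfBallBarrier, add_sub_right_comm y, norm_add_sq_real, inner_add_right,
    inner_smul_right, norm_smul, Real.norm_eq_abs, mul_pow, sq_abs]
  ring

theorem laplacian_halfBallBarrier [FiniteDimensional ℝ E] (y : E) :
    Δ (halfBallBarrier x₀ e r c K) y = 2 * c * (finrank ℝ E - ‖e‖ ^ 2) - 2 * K * ‖e‖ ^ 2 / r := by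
  set v := stdOrthonormalBasis ℝ E
  have hparseval : ∑ i, ⟪e, v i⟫ ^ 2 = ‖e‖ ^ 2 := by
    simpa [sq, real_inner_comm e] using v.sum_inner_mul_inner e e
  have hterm : ∀ β : ℝ, 2 * (c * (1 ^ 2 - β ^ 2) - K * β ^ 2 / r) =
      2 * c - (2 * c + 2 * K / r) * β ^ 2 := fun β => by ring
  rw [contDiff_halfBallBarrier.contDiffAt.laplacian_eq_sum_deriv_deriv v]
  simp only [halfBallBarrier_add_smul, deriv_deriv_quadratic, v.norm_eq_one, hterm,
    Finset.sum_sub_distrib, ← Finset.mul_sum, hparseval, Finset.sum_const, Finset.card_univ,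
    Fintype.card_fin, nsmul_eq_mul]
  ring

theorem laplacian_halfBallBarrier_lt [FiniteDimensional ℝ E] {M ε : ℝ} (he : ‖e‖ = 1)
    (hr : 0 < r) (hK : r * M / 2 + 2 * (finrank ℝ E - 1) * ε / r < K) (y : E) :
    Δ (halfBallBarrier x₀ e r (2 * ε / r ^ 2) K) y < -M := by
  have hΔ : 2 * (2 * ε / r ^ 2) * (finrank ℝ E - 1 ^ 2) - 2 * K * 1 ^ 2 / r =
      -(2 / r * (K - 2 * (finrank ℝ E - 1) * ε / r)) := by
    field_simp
    ring
  have : M < 2 / r * (K - 2 * (finrank ℝ E - 1) * ε / r) := by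
    rw [div_mul_eq_mul_div, lt_div_iff₀ hr]
    linarith
  rw [laplacian_halfBallBarrier, he, hΔ]
  linarith

theorem inner_sq_le_norm_sq_of_norm_eq_one (he : ‖e‖ = 1) (z : E) : ⟪e, z⟫ ^ 2 ≤ ‖z‖ ^ 2 := by
  simpa [he] using sq_le_sq.2 (abs_real_inner_le_norm e z |>.trans_eq (by simp [he]))

theorem halfBallBarrier_nonneg (he : ‖e‖ = 1) (hr : 0 < r) (hc : 0 ≤ c) (hK : 0 ≤ K) {y : E}
    (hs₀ : 0 ≤ ⟪e, y - x₀⟫) (hs : ⟪e, y - x₀⟫ ≤ r) : 0 ≤ halfBallBarrier x₀ e r c K y := by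
  have h₁ := inner_sq_le_norm_sq_of_norm_eq_one he (y - x₀)
  have h₂ : ⟪e, y - x₀⟫ ^ 2 / r ≤ ⟪e, y - x₀⟫ := by
    rw [div_le_iff₀ hr]
    nlinarith
  exact add_nonneg (mul_nonneg hc (by linarith)) (mul_nonneg hK (by linarith))

theorem le_halfBallBarrier {ε : ℝ} (he : ‖e‖ = 1) (hr : 0 < r) (hε : 0 ≤ ε) (hK : 4 * ε / r ≤ K)
    {y : E} (hs₀ : 0 ≤ ⟪e, y - x₀⟫) (hs : ⟪e, y - x₀⟫ ≤ r / 2)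
    (hy : ⟪e, y - x₀⟫ = r / 2 ∨ ‖y - x₀‖ = r) :
    ε ≤ halfBallBarrier x₀ e r (2 * ε / r ^ 2) K y := by
  have hK₀ : 0 ≤ K := (by positivity : 0 ≤ 4 * ε / r).trans hK
  have hc : 0 ≤ 2 * ε / r ^ 2 := by positivity
  have hlin : 0 ≤ ⟪e, y - x₀⟫ - ⟪e, y - x₀⟫ ^ 2 / r := by
    rw [sub_nonneg, div_le_iff₀ hr]
    nlinarith
  unfold halfBallBarrier
  rcases hy with hcap | hsphere
  · have hcapK : ε ≤ K * (r / 2 - (r / 2) ^ 2 / r) := by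
      rw [div_le_iff₀ hr] at hK
      field_simp
      nlinarith
    have := inner_sq_le_norm_sq_of_norm_eq_one he (y - x₀)
    rw [hcap] at this ⊢
    nlinarith [mul_nonneg hc (sub_nonneg.2 this)]
  · have hsphereε : ε ≤ 2 * ε / r ^ 2 * (r ^ 2 - (r / 2) ^ 2) := by
      field_simp
      nlinarith
    have : ⟪e, y - x₀⟫ ^ 2 ≤ (r / 2) ^ 2 := pow_le_pow_left₀ hs₀ hs 2
    rw [hsphere]
    nlinarith [mul_le_mul_of_nonneg_left this hc, mul_nonneg hK₀ hlin]

theorem le_halfBallBarrier_of_mem_diff {w : E → ℝ} {ε : ℝ} (he : ‖e‖ = 1) (hr : 0 < r)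
    (hε : 0 ≤ ε) (hK : 4 * ε / r ≤ K) (hzero : ∀ y ∈ closedBall x₀ r, ⟪e, y - x₀⟫ = 0 → w y = 0)
    (hle : ∀ y ∈ closedBall x₀ r, w y ≤ ε) {y : E}
    (hy : y ∈ (closedBall x₀ r ∩ {y | ⟪e, y - x₀⟫ ∈ Icc 0 (r / 2)}) \
      (ball x₀ r ∩ {y | ⟪e, y - x₀⟫ ∈ Ioo 0 (r / 2)})) :
    w y ≤ halfBallBarrier x₀ e r (2 * ε / r ^ 2) K y := by
  obtain ⟨⟨hyB, hs₀, hs⟩, hyU⟩ := hy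
  rcases hs₀.eq_or_lt with h₀ | hpos
  · rw [hzero y hyB h₀.symm]
    exact halfBallBarrier_nonneg he hr (by positivity)
      ((by positivity : 0 ≤ 4 * ε / r).trans hK) hs₀ (by linarith)
  · have hbd : ⟪e, y - x₀⟫ = r / 2 ∨ ‖y - x₀‖ = r := by
      by_contra! h
      exact hyU ⟨mem_ball_iff_norm.2 ((mem_closedBall_iff_norm.1 hyB).lt_of_ne h.2),
        hpos, hs.lt_of_ne h.1⟩
    exact (hle y hyB).trans (le_halfBallBarrier he hr hε hK hs₀ hs hbd)

theorem le_mul_of_laplacian_ge [FiniteDimensional ℝ E] {w : E → ℝ} {M ε t : ℝ} (he : ‖e‖ = 1)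
    (hr : 0 < r) (hM : 0 ≤ M) (hwc : ContinuousOn w (closedBall x₀ r))
    (hw : ContDiffOn ℝ 2 w (ball x₀ r)) (hΔ : ∀ y ∈ ball x₀ r, -M ≤ Δ w y)
    (hzero : ∀ y ∈ closedBall x₀ r, ⟪e, y - x₀⟫ = 0 → w y = 0)
    (hle : ∀ y ∈ closedBall x₀ r, w y ≤ ε)
    (hK : r * M / 2 + 2 * (finrank ℝ E + 1) * ε / r < K) (ht : t ∈ Icc 0 (r / 2)) :
    w (x₀ + t • e) ≤ K * t := by
  have hx₀ : x₀ ∈ closedBall x₀ r := mem_closedBall_self hr.le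
  have hε : 0 ≤ ε := by simpa [hzero x₀ hx₀ (by simp)] using hle x₀ hx₀
  have hd : (1 : ℝ) ≤ finrank ℝ E := by
    have : Nontrivial E := nontrivial_of_ne e 0 (by rintro rfl; simp at he)
    exact_mod_cast finrank_pos
  have hKΔ : r * M / 2 + 2 * (finrank ℝ E - 1) * ε / r < K := by
    have : 2 * (finrank ℝ E - 1) * ε / r ≤ 2 * (finrank ℝ E + 1) * ε / r := by gcongr; linarith
    linarith
  have hKbd : 4 * ε / r ≤ K := by
    have : 4 * ε / r ≤ 2 * (finrank ℝ E + 1) * ε / r := by gcongr; linarith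
    linarith [(by positivity : 0 ≤ r * M / 2)]
  set s : E → ℝ := fun y => ⟪e, y - x₀⟫ with hs_def
  have hs : Continuous s := continuous_const.inner (continuous_id.sub continuous_const)
  set b := halfBallBarrier x₀ e r (2 * ε / r ^ 2) K
  have hb : ContDiff ℝ 2 b := contDiff_halfBallBarrier
  have hmax : (w - b) (x₀ + t • e) ≤ 0 := by
    refine ((isCompact_closedBall x₀ r).inter_right (isClosed_Icc.preimage hs)).le_of_laplacian_pos
      (U := ball x₀ r ∩ s ⁻¹' Ioo 0 (r / 2)) (isOpen_ball.inter (isOpen_Ioo.preimage hs))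
      (inter_subset_inter ball_subset_closedBall (preimage_mono Ioo_subset_Icc_self))
      ((hwc.mono inter_subset_left).sub hb.continuous.continuousOn)
      (fun y hy => (hw.contDiffAt (isOpen_ball.mem_nhds hy.1)).sub hb.contDiffAt)
      (fun y hy => ?_) (fun y hy => ?_) ?_
    · rw [(hw.contDiffAt (isOpen_ball.mem_nhds hy.1)).laplacian_sub hb.contDiffAt]
      linarith [hΔ y hy.1, laplacian_halfBallBarrier_lt (x₀ := x₀) he hr hKΔ y]
    · exact sub_nonpos.2 (le_halfBallBarrier_of_mem_diff he hr hε hKbd hzero hle hy)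
    · refine ⟨mem_closedBall_iff_norm.2 ?_, by simpa [hs_def, inner_smul_right, he] using ht⟩
      simpa [norm_smul, he, abs_of_nonneg ht.1] using ht.2.trans (by linarith)
  have hbt : b (x₀ + t • e) = K * (t - t ^ 2 / r) := by
    simp [b, halfBallBarrier, norm_smul, inner_smul_right, he, abs_of_nonneg ht.1]
  have : 0 ≤ K * (t ^ 2 / r) := by
    have := (by positivity : 0 ≤ 4 * ε / r).trans hKbd
    positivity
  simp only [Pi.sub_apply, hbt] at hmax
  linarith

end Barrier

section Reflection

variable {E : Type*} [NormedAddCommGroup E] [InnerProductSpace ℝ E] [FiniteDimensional ℝ E]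
  {x₀ e : E} {u : E → ℝ} {r : ℝ}

noncomputable def hyperplaneReflection (x₀ e : E) : E ≃ᵃⁱ[ℝ] E :=
  EuclideanGeometry.reflection (AffineSubspace.mk' x₀ (ℝ ∙ e)ᗮ)

theorem dist_hyperplaneReflection (y : E) :
    dist (hyperplaneReflection x₀ e y) x₀ = dist y x₀ := by
  rw [dist_comm, hyperplaneReflection, EuclideanGeometry.dist_reflection_eq_of_mem _
    (AffineSubspace.self_mem_mk' _ _), dist_comm]

theorem hyperplaneReflection_eq_self {y : E} (hy : ⟪e, y - x₀⟫ = 0) :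
    hyperplaneReflection x₀ e y = y := by
  rw [hyperplaneReflection, EuclideanGeometry.reflection_eq_self_iff, AffineSubspace.mem_mk',
    vsub_eq_sub, Submodule.mem_orthogonal_singleton_iff_inner_right, hy]

theorem hyperplaneReflection_add_smul (t : ℝ) :
    hyperplaneReflection x₀ e (x₀ + t • e) = x₀ - t • e := by
  have hdir : t • e ∈ (AffineSubspace.mk' x₀ (ℝ ∙ e)ᗮ).directionᗮ := by
    rw [AffineSubspace.direction_mk', Submodule.orthogonal_orthogonal]
    exact Submodule.smul_mem _ _ (Submodule.mem_span_singleton_self e)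
  rw [hyperplaneReflection]
  simpa [add_comm, ← sub_eq_add_neg] using
    EuclideanGeometry.reflection_orthogonal_vadd (AffineSubspace.self_mem_mk' x₀ _) hdir

theorem contDiff_hyperplaneReflection {n : WithTop ℕ∞} :
    ContDiff ℝ n (hyperplaneReflection x₀ e) :=
  (hyperplaneReflection x₀ e).toAffineIsometry.toContinuousAffineMap.contDiff

theorem mapsTo_hyperplaneReflection_closedBall :
    MapsTo (hyperplaneReflection x₀ e) (closedBall x₀ r) (closedBall x₀ r) := fun y hy => by
  rwa [mem_closedBall, dist_hyperplaneReflection]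

theorem mapsTo_hyperplaneReflection_ball :
    MapsTo (hyperplaneReflection x₀ e) (ball x₀ r) (ball x₀ r) := fun y hy => by
  rwa [mem_ball, dist_hyperplaneReflection]

noncomputable def hyperplaneOddPart (u : E → ℝ) (x₀ e : E) : E → ℝ :=
  (2⁻¹ : ℝ) • (u - u ∘ hyperplaneReflection x₀ e)

theorem ContinuousOn.hyperplaneOddPart (hc : ContinuousOn u (closedBall x₀ r)) :
    ContinuousOn (hyperplaneOddPart u x₀ e) (closedBall x₀ r) :=
  (hc.sub (hc.comp (hyperplaneReflection x₀ e).continuous.continuousOn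
    mapsTo_hyperplaneReflection_closedBall)).const_smul (2⁻¹ : ℝ)

theorem ContDiffOn.hyperplaneOddPart (hu : ContDiffOn ℝ 2 u (ball x₀ r)) :
    ContDiffOn ℝ 2 (hyperplaneOddPart u x₀ e) (ball x₀ r) :=
  (hu.sub (hu.comp contDiff_hyperplaneReflection.contDiffOn
    mapsTo_hyperplaneReflection_ball)).const_smul (2⁻¹ : ℝ)

theorem abs_laplacian_hyperplaneOddPart_le {M : ℝ} (hu : ContDiffOn ℝ 2 u (ball x₀ r))
    (hΔ : ∀ y ∈ ball x₀ r, |Δ u y| ≤ M) {y : E} (hy : y ∈ ball x₀ r) :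
    |Δ (hyperplaneOddPart u x₀ e) y| ≤ M := by
  set R := hyperplaneReflection x₀ e
  have hRy : R y ∈ ball x₀ r := mapsTo_hyperplaneReflection_ball hy
  have hu_y := hu.contDiffAt (isOpen_ball.mem_nhds hy)
  have huR_y : ContDiffAt ℝ 2 (u ∘ R) y :=
    (hu.contDiffAt (isOpen_ball.mem_nhds hRy)).comp y contDiff_hyperplaneReflection.contDiffAt
  rw [hyperplaneOddPart, laplacian_smul (f := u - u ∘ R) _ (hu_y.sub huR_y),
    hu_y.laplacian_sub huR_y, laplacian_comp_affineIsometryEquiv, smul_eq_mul, abs_mul,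
    abs_of_pos (by norm_num)]
  have := abs_sub (Δ u y) (Δ u (R y))
  linarith [hΔ y hy, hΔ (R y) hRy]

theorem hyperplaneOddPart_eq_zero {y : E} (hy : ⟪e, y - x₀⟫ = 0) :
    hyperplaneOddPart u x₀ e y = 0 := by
  simp [hyperplaneOddPart, hyperplaneReflection_eq_self hy]

theorem abs_hyperplaneOddPart_le {ε a : ℝ} (hosc : ∀ y ∈ closedBall x₀ r, |u y - a| ≤ ε) {y : E}
    (hy : y ∈ closedBall x₀ r) : |hyperplaneOddPart u x₀ e y| ≤ ε := by
  have hRy := hosc _ (mapsTo_hyperplaneReflection_closedBall (e := e) hy)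
  have := abs_sub (u y - a) (u (hyperplaneReflection x₀ e y) - a)
  simp only [hyperplaneOddPart, Pi.smul_apply, Pi.sub_apply, Function.comp_apply, smul_eq_mul,
    abs_mul, abs_of_pos (by norm_num : (0 : ℝ) < 2⁻¹), sub_sub_sub_cancel_right] at this ⊢
  linarith [hosc y hy]

theorem hasDerivAt_hyperplaneOddPart_add_smul (hu : DifferentiableAt ℝ u x₀) :
    HasDerivAt (fun t : ℝ => hyperplaneOddPart u x₀ e (x₀ + t • e)) (fderiv ℝ u x₀ e) 0 := by
  have hline : ∀ v : E, HasDerivAt (fun t : ℝ => u (x₀ + t • v)) (fderiv ℝ u x₀ v) 0 := fun v =>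
    hu.hasFDerivAt.comp_hasDerivAt_of_eq 0 (hasDerivAt_add_smul x₀ v 0) (by simp)
  have hodd : (fun t : ℝ => hyperplaneOddPart u x₀ e (x₀ + t • e)) =
      fun t => 2⁻¹ * (u (x₀ + t • e) - u (x₀ + t • -e)) := by
    funext t
    simp [hyperplaneOddPart, hyperplaneReflection_add_smul, sub_eq_add_neg]
  rw [hodd]
  exact (((hline e).sub (hline (-e))).const_mul 2⁻¹).congr_deriv (by rw [map_neg]; ring)

theorem abs_fderiv_apply_le_of_abs_laplacian_le {M ε a : ℝ} (he : ‖e‖ = 1) (hr : 0 < r)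
    (hc : ContinuousOn u (closedBall x₀ r)) (hu : ContDiffOn ℝ 2 u (ball x₀ r))
    (hΔ : ∀ y ∈ ball x₀ r, |Δ u y| ≤ M) (hosc : ∀ y ∈ closedBall x₀ r, |u y - a| ≤ ε) :
    |fderiv ℝ u x₀ e| ≤ r * M / 2 + 2 * (finrank ℝ E + 1) * ε / r := by
  set w := hyperplaneOddPart u x₀ e
  have hM : 0 ≤ M := (abs_nonneg _).trans (hΔ x₀ (mem_ball_self hr))
  have hwc : ContinuousOn w (closedBall x₀ r) := hc.hyperplaneOddPart
  have hw : ContDiffOn ℝ 2 w (ball x₀ r) := hu.hyperplaneOddPart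
  have hΔw : ∀ y ∈ ball x₀ r, |Δ w y| ≤ M := fun y hy =>
    abs_laplacian_hyperplaneOddPart_le hu hΔ hy
  have hzero : ∀ y ∈ closedBall x₀ r, ⟪e, y - x₀⟫ = 0 → w y = 0 := fun y _ hy =>
    hyperplaneOddPart_eq_zero hy
  have hwε : ∀ y ∈ closedBall x₀ r, |w y| ≤ ε := fun y hy => abs_hyperplaneOddPart_le hosc hy
  have hderiv : HasDerivAt (fun t : ℝ => w (x₀ + t • e)) (fderiv ℝ u x₀ e) 0 :=
    hasDerivAt_hyperplaneOddPart_add_smul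
      ((hu.differentiableOn two_ne_zero).differentiableAt (isOpen_ball.mem_nhds (mem_ball_self hr)))
  refine le_of_forall_gt_imp_ge_of_dense fun K hK => abs_le_of_hasDerivAt_of_abs_le_mul hderiv
    (by simpa using hzero x₀ (mem_closedBall_self hr.le) (by simp)) (half_pos hr)
    fun t ht => abs_le.2 ⟨?_, ?_⟩
  · have := le_mul_of_laplacian_ge (w := -w) he hr hM hwc.neg hw.neg
      (fun y hy => by rw [laplacian_neg, Pi.neg_apply]; linarith [abs_le.1 (hΔw y hy)])
      (fun y hy h => by simp [hzero y hy h])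
      (fun y hy => by rw [Pi.neg_apply]; linarith [abs_le.1 (hwε y hy)]) hK (Ioc_subset_Icc_self ht)
    rw [Pi.neg_apply] at this
    linarith
  · exact le_mul_of_laplacian_ge he hr hM hwc hw (fun y hy => (abs_le.1 (hΔw y hy)).1)
      hzero (fun y hy => (abs_le.1 (hwε y hy)).2) hK (Ioc_subset_Icc_self ht)

theorem abs_fderiv_apply_self_le_of_abs_laplacian_le {M ε a : ℝ} (hx : x₀ ≠ 0)
    (hc : ContinuousOn u (closedBall x₀ (‖x₀‖ / 2))) (hu : ContDiffOn ℝ 2 u (ball x₀ (‖x₀‖ / 2)))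
    (hΔ : ∀ y ∈ ball x₀ (‖x₀‖ / 2), |Δ u y| ≤ M)
    (hosc : ∀ y ∈ closedBall x₀ (‖x₀‖ / 2), |u y - a| ≤ ε) :
    |fderiv ℝ u x₀ x₀| ≤ ‖x₀‖ ^ 2 * M / 4 + 4 * (finrank ℝ E + 1) * ε := by
  have hx' : 0 < ‖x₀‖ := norm_pos_iff.2 hx
  have hbound := abs_fderiv_apply_le_of_abs_laplacian_le (e := ‖x₀‖⁻¹ • x₀)
    (norm_smul_inv_norm hx) (half_pos hx') hc hu hΔ hosc
  rw [map_smul, smul_eq_mul, abs_mul, abs_inv, abs_norm, inv_mul_le_iff₀ hx'] at hbound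
  exact hbound.trans_eq (by field_simp; ring)

end Reflection

theorem laplacian_eq_laplacian {N : ℕ} (u : EuclideanSpace ℝ (Fin N) → ℝ)
    (x : EuclideanSpace ℝ (Fin N)) : laplacian u x = Δ u x := by
  simp [laplacian, laplacian_eq_iteratedFDeriv_orthonormalBasis u (EuclideanSpace.basisFun _ ℝ)]

theorem IsHenonSolution.abs_fderiv_apply_self_le {N : ℕ} {α p : ℝ}
    {u : EuclideanSpace ℝ (Fin N) → ℝ} (hu : IsHenonSolution N α p u) :
    ∃ C, ∀ x : EuclideanSpace ℝ (Fin N), x ≠ 0 → ‖x‖ ≤ 1 →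
      ∀ ε, (∀ y ∈ closedBall 0 (2 * ‖x‖), |u y - u 0| ≤ ε) →
        |fderiv ℝ u x x| ≤ C * ‖x‖ ^ (2 + α) + 4 * (N + 1) * ε := by
  obtain ⟨hc, hpos, hC2, heq⟩ := hu
  obtain ⟨U, hU⟩ := (isCompact_closedBall (0 : EuclideanSpace ℝ (Fin N)) 2).bddAbove_image
    (hc.rpow_const fun y => Or.inl (hpos y).ne').continuousOn
  refine ⟨2 ^ |α| * U / 4, fun x hx hx₁ ε hosc => ?_⟩
  have hx' : 0 < ‖x‖ := norm_pos_iff.2 hx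
  have hnorm : ∀ y ∈ closedBall x (‖x‖ / 2), ‖x‖ / 2 ≤ ‖y‖ ∧ ‖y‖ ≤ 2 * ‖x‖ := fun y hy => by
    rw [mem_closedBall, dist_eq_norm] at hy
    constructor <;>
      linarith [norm_sub_norm_le x y, norm_le_norm_add_norm_sub' y x, norm_sub_rev x y]
  have hΔ : ∀ y ∈ ball x (‖x‖ / 2), |Δ u y| ≤ 2 ^ |α| * ‖x‖ ^ α * U := fun y hy => by
    obtain ⟨h₁, h₂⟩ := hnorm y (ball_subset_closedBall hy)
    have hup : 0 ≤ u y ^ p := Real.rpow_nonneg (hpos y).le p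
    rw [← laplacian_eq_laplacian, ← abs_neg, heq y (norm_pos_iff.1 (by linarith)),
      abs_of_nonneg (by positivity)]
    exact mul_le_mul (Real.rpow_le_two_rpow_abs_mul_rpow α hx' h₁ h₂)
      (hU ⟨y, mem_closedBall_zero_iff.2 (by linarith), rfl⟩) hup (by positivity)
  have := abs_fderiv_apply_self_le_of_abs_laplacian_le hx hc.continuousOn
    (hC2.mono fun y hy => mem_compl_singleton_iff.2
      (norm_pos_iff.1 (by linarith [(hnorm y (ball_subset_closedBall hy)).1])))
    hΔ fun y hy => hosc y (mem_closedBall_zero_iff.2 (hnorm y hy).2)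
  rw [finrank_euclideanSpace_fin] at this
  refine this.trans_eq ?_
  rw [Real.rpow_add hx', Real.rpow_two]
  ring

theorem henon_radial_derivative_vanishes_general (N : ℕ) (α p : ℝ)
    (hα : -2 < α)
    (u : EuclideanSpace ℝ (Fin N) → ℝ) (hu : IsHenonSolution N α p u) :
    Tendsto (fun x : EuclideanSpace ℝ (Fin N) => (inner ℝ (gradient u x) x : ℝ))
      (nhdsWithin 0 {(0 : EuclideanSpace ℝ (Fin N))}ᶜ) (nhds 0) := by
  obtain ⟨C, hC⟩ := hu.abs_fderiv_apply_self_le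
  simp only [gradient, toDual_symm_apply]
  refine Metric.tendsto_nhds.2 fun η hη => ?_
  set ε := η / (8 * (N + 1)) with hε
  have hpow : Tendsto (fun x : EuclideanSpace ℝ (Fin N) => C * ‖x‖ ^ (2 + α)) (𝓝 0) (𝓝 0) := by
    simpa [Real.zero_rpow (by linarith : 2 + α ≠ 0)] using
      ((continuous_norm.rpow_const (p := 2 + α) fun _ => Or.inr (by linarith)).const_mul C).tendsto
        (0 : EuclideanSpace ℝ (Fin N))
  have hosc : ∀ᶠ x in 𝓝 (0 : EuclideanSpace ℝ (Fin N)),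
      closedBall 0 (2 * ‖x‖) ⊆ u ⁻¹' closedBall (u 0) ε := by
    refine Tendsto.eventually ?_ (eventually_closedBall_subset
      (hu.1.continuousAt.preimage_mem_nhds (closedBall_mem_nhds _ (by positivity))))
    simpa using (continuous_norm.const_mul 2).tendsto (0 : EuclideanSpace ℝ (Fin N))
  filter_upwards [self_mem_nhdsWithin, nhdsWithin_le_nhds (hpow.eventually_lt_const (half_pos hη)),
    nhdsWithin_le_nhds hosc, nhdsWithin_le_nhds (closedBall_mem_nhds 0 one_pos)]
    with x hx hCx hoscx hx₁
  have := hC x hx (mem_closedBall_zero_iff.1 hx₁) ε fun y hy => hoscx hy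
  have : 4 * (N + 1) * ε = η / 2 := by rw [hε]; field_simp; ring
  rw [dist_zero_right, Real.norm_eq_abs]
  linarith

theorem henon_radial_derivative_vanishes (N : ℕ) (hN : 3 ≤ N) (α p : ℝ)
    (hα : -2 < α) (hp : 1 < p)
    (u : EuclideanSpace ℝ (Fin N) → ℝ) (hu : IsHenonSolution N α p u) :
    Tendsto (fun x : EuclideanSpace ℝ (Fin N) => (inner ℝ (gradient u x) x : ℝ))
      (nhdsWithin 0 {(0 : EuclideanSpace ℝ (Fin N))}ᶜ) (nhds 0) :=
  henon_radial_derivative_vanishes_general N α p hα u hu
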